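/- For every integer k ≥ 1 and every polynomial q ∈ R, ((E + n)∘(E + n + 1)∘⋯∘(E + n + k − 1))(q) = ∑_{α ∈ ℕ^n, |α| = k} (k!/(α_1!⋯α_n!)) · ∂^α (x^α · q), where (E + j)(q) denotes E(q) + j·q. -/

import Mathlib

/-!
Write `E + n = ∑ᵢ ∂ᵢ ∘ xᵢ`. Moving `∂ᵢ` past `x^α` with the Leibniz rule gives
`∂^α x^α ∂ᵢ xᵢ = ∂^{α+eᵢ} x^{α+eᵢ} − αᵢ ∂^α x^α`, so for `|α| = k` the operator
`∂^α x^α ∘ (E + n + k)` equals `∑ᵢ ∂^{α+eᵢ} x^{α+eᵢ}`. Summed against the multinomial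
coefficients, the recursion `(αᵢ + 1) · multinomial (α + eᵢ) = (|α| + 1) · multinomial α` turns
this into `Sₖ ∘ (E + n + k) = Sₖ₊₁` for the right-hand side `Sₖ`, which is the recursion defining
the left-hand side.
-/

open MvPolynomial

namespace Arrangement

variable {n : ℕ}

/-- The Euler operator `E(q) = ∑ᵢ xᵢ · ∂q/∂xᵢ`. -/
noncomputable def eulerOp (q : MvPolynomial (Fin n) ℂ) : MvPolynomial (Fin n) ℂ :=
  ∑ i, X i * pderiv i q

/-- The iterated partial derivative `∂^α = ∂₁^{α₁} ∘ ⋯ ∘ ∂ₙ^{αₙ}`. -/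
noncomputable def pdIter (α : Fin n → ℕ) : Module.End ℂ (MvPolynomial (Fin n) ℂ) :=
  (List.finRange n).foldr
    (fun i f => ((pderiv i : Derivation ℂ _ _).toLinearMap ^ α i) * f) 1

/-- The composition `(E + n) ∘ (E + n + 1) ∘ ⋯ ∘ (E + n + (k−1))`, applied to `q`. -/
noncomputable def eulerUpProd (n : ℕ) :
    ℕ → MvPolynomial (Fin n) ℂ → MvPolynomial (Fin n) ℂ
  | 0, q => q
  | k + 1, q => eulerUpProd n k (eulerOp q + ((n : MvPolynomial (Fin n) ℂ) + k) * q)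

end Arrangement

open Finset

theorem Nat.succ_mul_multinomial_add_single {ι : Type*} [DecidableEq ι] {s : Finset ι} {i : ι}
    (hi : i ∈ s) (α : ι → ℕ) :
    (α i + 1) * Nat.multinomial s (α + Pi.single i 1) =
      (∑ j ∈ s, α j + 1) * Nat.multinomial s α := by
  have hs : s = insert i (s.erase i) := (insert_erase hi).symm
  have hrest : ∀ j ∈ s.erase i, (α + Pi.single i 1 : ι → ℕ) j = α j := fun j hj => by
    simp [Pi.single_eq_of_ne (ne_of_mem_erase hj)]
  rw [hs, Nat.multinomial_insert (notMem_erase i s), Nat.multinomial_insert (notMem_erase i s),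
    Nat.multinomial_congr hrest, sum_congr rfl hrest, sum_insert (notMem_erase i s)]
  simp only [Pi.add_apply, Pi.single_eq_same]
  rw [add_right_comm, ← mul_assoc, ← mul_assoc, Nat.add_one_mul_choose_eq, mul_comm (α i + 1)]

theorem Finset.Nat.sum_antidiagonalTuple_add_single {M : Type*} [AddCommMonoid M] {n : ℕ}
    (k : ℕ) (i : Fin n) (G : (Fin n → ℕ) → M) (hG : ∀ β, β i = 0 → G β = 0) :
    ∑ α ∈ antidiagonalTuple n k, G (α + Pi.single i 1) =
      ∑ β ∈ antidiagonalTuple n (k + 1), G β := by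
  have hsum (α : Fin n → ℕ) : ∑ j, (α + Pi.single i 1 : Fin n → ℕ) j = ∑ j, α j + 1 := by
    simp [sum_add_distrib]
  refine sum_bij_ne_zero (fun α _ _ => α + Pi.single i 1) (fun α hα _ => ?_)
    (fun α _ _ β _ _ h => add_right_cancel h) (fun β hβ hGβ => ?_) (fun _ _ _ => rfl)
  · rw [mem_antidiagonalTuple] at hα ⊢
    rw [hsum, hα]
  · have hβi : β i ≠ 0 := fun h => hGβ (hG β h)
    have hcancel : β - Pi.single i 1 + Pi.single i 1 = β := by
      ext j
      rcases eq_or_ne j i with rfl | hj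
      · simp only [Pi.add_apply, Pi.sub_apply, Pi.single_eq_same]
        omega
      · simp [Pi.single_eq_of_ne hj]
    refine ⟨β - Pi.single i 1, ?_, by rwa [hcancel], hcancel⟩
    rw [mem_antidiagonalTuple] at hβ ⊢
    have := hsum (β - Pi.single i 1)
    rw [hcancel, hβ] at this
    omega

theorem Finset.Nat.sum_multinomial_smul_sum_add_single {M : Type*} [AddCommMonoid M]
    [IsAddTorsionFree M] {n : ℕ} (k : ℕ) (T : (Fin n → ℕ) → M) :
    ∑ α ∈ antidiagonalTuple n k, Nat.multinomial univ α • ∑ i, T (α + Pi.single i 1) =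
      ∑ β ∈ antidiagonalTuple n (k + 1), Nat.multinomial univ β • T β := by
  -- after multiplying by `k + 1`, the multinomial recursion reduces this to reindexing by `α + eᵢ`
  apply nsmul_right_injective (Nat.succ_ne_zero k)
  dsimp only
  calc (k + 1) • ∑ α ∈ antidiagonalTuple n k, Nat.multinomial univ α • ∑ i, T (α + Pi.single i 1)
      = ∑ i, ∑ α ∈ antidiagonalTuple n k,
          ((α + Pi.single i 1 : Fin n → ℕ) i * Nat.multinomial univ (α + Pi.single i 1)) •
            T (α + Pi.single i 1) := by
        simp only [smul_sum, smul_smul]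
        rw [sum_comm]
        refine sum_congr rfl fun i _ => sum_congr rfl fun α hα => ?_
        rw [← mem_antidiagonalTuple.1 hα]
        simp [Nat.succ_mul_multinomial_add_single (mem_univ i)]
    _ = ∑ i, ∑ β ∈ antidiagonalTuple n (k + 1), (β i * Nat.multinomial univ β) • T β :=
        sum_congr rfl fun i _ => sum_antidiagonalTuple_add_single k i
          (fun β => (β i * Nat.multinomial univ β) • T β) fun β h => by simp [h]
    _ = (k + 1) • ∑ β ∈ antidiagonalTuple n (k + 1), Nat.multinomial univ β • T β := by
        rw [sum_comm, smul_sum]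
        refine sum_congr rfl fun β hβ => ?_
        rw [← sum_smul, ← sum_mul, mem_antidiagonalTuple.1 hβ, mul_smul]

namespace MvPolynomial

variable {σ R : Type*}

theorem pderiv_pderiv_comm [CommRing R] (i j : σ) (p : MvPolynomial σ R) :
    pderiv i (pderiv j p) = pderiv j (pderiv i p) := by
  have hbracket : ⁅pderiv i, pderiv j⁆ = (0 : Derivation R (MvPolynomial σ R) _) :=
    derivation_ext fun k => by
      classical
      rw [Derivation.commutator_apply, pderiv_X, pderiv_X, Pi.single_apply, Pi.single_apply]
      split_ifs <;> simp
  rw [← sub_eq_zero, ← Derivation.commutator_apply, hbracket, Derivation.zero_apply]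

theorem commute_pderiv [CommRing R] (i j : σ) :
    Commute (pderiv i : Derivation R (MvPolynomial σ R) _).toLinearMap (pderiv j).toLinearMap :=
  LinearMap.ext (pderiv_pderiv_comm i j)

theorem prod_X_pow_add_single [CommSemiring R] [Fintype σ] [DecidableEq σ] (α : σ → ℕ) (i : σ) :
    ∏ j, (X j : MvPolynomial σ R) ^ (α + Pi.single i 1 : σ → ℕ) j = (∏ j, X j ^ α j) * X i := by
  simp only [Pi.add_apply, pow_add, prod_mul_distrib, Pi.single_apply, pow_ite, pow_one, pow_zero,
    prod_ite_eq', mem_univ, if_true]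

theorem X_mul_pderiv_prod_X_pow [CommSemiring R] [Fintype σ] (α : σ → ℕ) (i : σ) :
    X i * pderiv i (∏ j, (X j : MvPolynomial σ R) ^ α j) = α i • ∏ j, X j ^ α j := by
  rw [prod_X_pow, X_mul_pderiv_monomial, Finsupp.indicator_of_mem (mem_univ i)]

end MvPolynomial

namespace Arrangement

variable {n : ℕ}

theorem pairwise_commute_pderiv_pow (α : Fin n → ℕ) :
    ((univ : Finset (Fin n)) : Set (Fin n)).Pairwise
      (Function.onFun Commute fun i =>
        (pderiv i : Derivation ℂ (MvPolynomial (Fin n) ℂ) _).toLinearMap ^ α i) :=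
  fun i _ j _ _ => (commute_pderiv i j).pow_pow _ _

theorem pdIter_eq_noncommProd (α : Fin n → ℕ) :
    pdIter α = univ.noncommProd (fun i => (pderiv i : Derivation ℂ _ _).toLinearMap ^ α i)
      (pairwise_commute_pderiv_pow α) := by
  unfold Finset.noncommProd
  simp_rw [pdIter, Fin.univ_val_map, Multiset.noncommProd_coe, List.ofFn_eq_map,
    List.prod_eq_foldr, List.foldr_map]

theorem pdIter_zero : pdIter (0 : Fin n → ℕ) = 1 := by
  simp [pdIter]

theorem pdIter_mul_pderiv (α : Fin n → ℕ) (i : Fin n) :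
    pdIter α * (pderiv i : Derivation ℂ (MvPolynomial (Fin n) ℂ) _).toLinearMap =
      pdIter (α + Pi.single i 1) := by
  classical
  rw [pdIter_eq_noncommProd, pdIter_eq_noncommProd, ← noncommProd_erase_mul _ (mem_univ i),
    ← noncommProd_erase_mul _ (mem_univ i), mul_assoc, ← pow_succ]
  congr 1
  · exact noncommProd_congr rfl (fun j hj => by simp [Pi.single_eq_of_ne (ne_of_mem_erase hj)]) _
  · simp

theorem pdIter_pderiv (α : Fin n → ℕ) (i : Fin n) (p : MvPolynomial (Fin n) ℂ) :
    pdIter α (pderiv i p) = pdIter (α + Pi.single i 1) p := by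
  rw [← pdIter_mul_pderiv]
  rfl

theorem eulerOp_add_natCast_mul (q : MvPolynomial (Fin n) ℂ) :
    eulerOp q + (n : MvPolynomial (Fin n) ℂ) * q = ∑ i, pderiv i (X i * q) := by
  simp [eulerOp, sum_add_distrib, add_comm]

theorem pdIter_prod_X_pow_mul_pderiv_X_mul (α : Fin n → ℕ) (i : Fin n)
    (q : MvPolynomial (Fin n) ℂ) :
    pdIter α ((∏ j, X j ^ α j) * pderiv i (X i * q)) =
      pdIter (α + Pi.single i 1) ((∏ j, X j ^ (α + Pi.single i 1 : Fin n → ℕ) j) * q) -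
        α i • pdIter α ((∏ j, X j ^ α j) * q) := by
  have hLeibniz : (∏ j, X j ^ α j) * pderiv i (X i * q) =
      pderiv i ((∏ j, X j ^ (α + Pi.single i 1 : Fin n → ℕ) j) * q) -
        α i • ((∏ j, X j ^ α j) * q) := by
    rw [eq_sub_iff_add_eq, prod_X_pow_add_single, mul_assoc,
      pderiv_mul (f := ∏ j, (X j : MvPolynomial (Fin n) ℂ) ^ α j), ← smul_mul_assoc,
      ← X_mul_pderiv_prod_X_pow]
    ring
  rw [hLeibniz, map_sub, map_nsmul, pdIter_pderiv]

theorem pdIter_prod_X_pow_mul_eulerOp_add (α : Fin n → ℕ) (q : MvPolynomial (Fin n) ℂ) :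
    pdIter α ((∏ j, X j ^ α j) * (eulerOp q +
        ((n : MvPolynomial (Fin n) ℂ) + ((∑ j, α j : ℕ) : MvPolynomial (Fin n) ℂ)) * q)) =
      ∑ i, pdIter (α + Pi.single i 1) ((∏ j, X j ^ (α + Pi.single i 1 : Fin n → ℕ) j) * q) := by
  rw [add_mul, ← add_assoc, eulerOp_add_natCast_mul, mul_add, map_add, mul_sum, map_sum,
    ← nsmul_eq_mul, mul_smul_comm, map_nsmul]
  simp only [pdIter_prod_X_pow_mul_pderiv_X_mul]
  rw [sum_sub_distrib, ← sum_smul, sub_add_cancel]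

end Arrangement

open Arrangement in
theorem eulerUpProd_eq_sum_multinomial_general
    (n : ℕ) (k : ℕ) (q : MvPolynomial (Fin n) ℂ) :
    eulerUpProd n k q =
      ∑ α ∈ Finset.Nat.antidiagonalTuple n k,
        (Nat.multinomial Finset.univ α : MvPolynomial (Fin n) ℂ) *
          pdIter α ((∏ i, X i ^ α i) * q) := by
  induction k generalizing q with
  | zero => simp [eulerUpProd, Nat.antidiagonalTuple_zero_right, pdIter_zero, Nat.multinomial]
  | succ k ih =>
    simp_rw [eulerUpProd, ih, ← nsmul_eq_mul]
    rw [← Nat.sum_multinomial_smul_sum_add_single k fun β => pdIter β ((∏ i, X i ^ β i) * q)]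
    refine sum_congr rfl fun α hα => ?_
    rw [← Nat.mem_antidiagonalTuple.1 hα, pdIter_prod_X_pow_mul_eulerOp_add]

open Arrangement in
/-- For every `k ≥ 1` and every polynomial `q`,
`(E + n)(E + n + 1)⋯(E + n + k − 1)(q) = ∑_{|α| = k} (k!/(α₁!⋯αₙ!)) · ∂^α (x^α · q)`. -/
theorem eulerUpProd_eq_sum_multinomial
    (n : ℕ) (hn : 1 ≤ n) (k : ℕ) (hk : 1 ≤ k) (q : MvPolynomial (Fin n) ℂ) :
    eulerUpProd n k q =
      ∑ α ∈ Finset.Nat.antidiagonalTuple n k,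
        (Nat.multinomial Finset.univ α : MvPolynomial (Fin n) ℂ) *
          pdIter α ((∏ i, X i ^ α i) * q) :=
  eulerUpProd_eq_sum_multinomial_general n k q
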